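/- arXiv:2303.13738 — 2 statements merged into one kernel-verified Lean document; each statement's English description precedes it below -/
import Mathlib

section
/- Let R : X → X be a bounded linear nonexpansive operator on a real Hilbert space. Then ker(Id - R) = ker(Id - R*), i.e., R and its adjoint R* have the same fixed point set. -/
/-! If `R x = x`, then `⟪R* x, x⟫ = ⟪x, R x⟫ = ‖x‖²` while `‖R* x‖ ≤ ‖x‖`, so
`‖R* x - x‖² = ‖R* x‖² - ‖x‖² ≤ 0`. Since `‖R*‖ = ‖R‖` and `R** = R`, the same argument
applied to `R*` gives the reverse inclusion. -/

section

variable {𝕜 E : Type*} [RCLike 𝕜] [NormedAddCommGroup E] [InnerProductSpace 𝕜 E]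

lemma eq_of_norm_le_of_re_inner_eq_norm_sq {x y : E} (hy : ‖y‖ ≤ ‖x‖)
    (h : RCLike.re (inner 𝕜 y x) = ‖x‖ ^ 2) : y = x := by
  have hsq : ‖y - x‖ ^ 2 ≤ 0 := by
    rw [@norm_sub_sq 𝕜, h]
    nlinarith [norm_nonneg y]
  have hnorm : ‖y - x‖ = 0 := pow_eq_zero_iff two_ne_zero |>.mp (le_antisymm hsq (sq_nonneg _))
  exact sub_eq_zero.mp (norm_eq_zero.mp hnorm)

namespace ContinuousLinearMap

lemma mem_ker_id_sub_iff (T : E →L[𝕜] E) (x : E) :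
    x ∈ LinearMap.ker ((ContinuousLinearMap.id 𝕜 E - T : E →L[𝕜] E) : E →ₗ[𝕜] E) ↔ T x = x := by
  rw [LinearMap.mem_ker, coe_coe, sub_apply, id_apply, sub_eq_zero, eq_comm]

variable [CompleteSpace E]

lemma adjoint_apply_eq_self_of_apply_eq_self {T : E →L[𝕜] E} (hT : ‖T‖ ≤ 1) {x : E}
    (hx : T x = x) : adjoint T x = x := by
  refine eq_of_norm_le_of_re_inner_eq_norm_sq (𝕜 := 𝕜) ?_ ?_
  · calc ‖adjoint T x‖ ≤ ‖adjoint T‖ * ‖x‖ := (adjoint T).le_opNorm x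
      _ ≤ 1 * ‖x‖ := by rw [LinearIsometryEquiv.norm_map]; gcongr
      _ = ‖x‖ := one_mul _
  · rw [adjoint_inner_left, hx, inner_self_eq_norm_sq]

lemma ker_id_sub_le_ker_id_sub_adjoint {T : E →L[𝕜] E} (hT : ‖T‖ ≤ 1) :
    LinearMap.ker ((ContinuousLinearMap.id 𝕜 E - T : E →L[𝕜] E) : E →ₗ[𝕜] E)
      ≤ LinearMap.ker ((ContinuousLinearMap.id 𝕜 E - adjoint T : E →L[𝕜] E) : E →ₗ[𝕜] E) :=
  fun x hx => by
    rw [mem_ker_id_sub_iff] at hx ⊢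
    exact adjoint_apply_eq_self_of_apply_eq_self hT hx

end ContinuousLinearMap

end

theorem ker_id_sub_eq_ker_id_sub_adjoint
    {X : Type*} [NormedAddCommGroup X] [InnerProductSpace ℝ X] [CompleteSpace X]
    (R : X →L[ℝ] X) (hR : ‖R‖ ≤ 1) :
    LinearMap.ker ((ContinuousLinearMap.id ℝ X - R : X →L[ℝ] X) : X →ₗ[ℝ] X)
      = LinearMap.ker ((ContinuousLinearMap.id ℝ X - ContinuousLinearMap.adjoint R : X →L[ℝ] X) : X →ₗ[ℝ] X) := by
  refine le_antisymm (ContinuousLinearMap.ker_id_sub_le_ker_id_sub_adjoint hR) ?_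
  have hR' : ‖ContinuousLinearMap.adjoint R‖ ≤ 1 := by rwa [LinearIsometryEquiv.norm_map]
  simpa only [ContinuousLinearMap.adjoint_adjoint] using
    ContinuousLinearMap.ker_id_sub_le_ker_id_sub_adjoint hR'
end

section
/- Let T : X → X be a bounded linear nonexpansive operator and κ ∈ (0,1]. Then T is κ-averaged if and only if the operator (2κ - 1)Id - (T*T - (1-κ)(T + T*)) is positive semidefinite. -/
/-! With `N := κ⁻¹ • (T - (1 - κ) • Id)`, the only candidate, `T` is `κ`-averaged exactly when
`‖T x - (1 - κ) • x‖ ≤ κ ‖x‖` for all `x`. Expanding the square with the adjoint gives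
`⟪x, ((2κ - 1) Id - (T*T - (1 - κ)(T + T*))) x⟫ = κ² ‖x‖² - ‖T x - (1 - κ) • x‖²`,
so that inequality is the positive semidefiniteness of the operator. -/

open Set RealInnerProductSpace

variable {X : Type*} [NormedAddCommGroup X] [InnerProductSpace ℝ X] [CompleteSpace X]

def Nonexpansive (T : X → X) : Prop := ∀ x y, ‖T x - T y‖ ≤ ‖x - y‖

def IsAveraged (T : X → X) (κ : ℝ) : Prop :=
  ∃ N : X → X, Nonexpansive N ∧ ∀ x, T x = (1 - κ) • x + κ • N x

theorem nonexpansive_iff_norm_map_le {E F : Type*} [NormedAddCommGroup E] [FunLike F E E]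
    [AddMonoidHomClass F E E] (f : F) : Nonexpansive f ↔ ∀ x, ‖f x‖ ≤ ‖x‖ :=
  ⟨fun h x => by simpa using h x 0, fun h x y => by simpa [map_sub] using h (x - y)⟩

section

variable {E : Type*} [NormedAddCommGroup E] [InnerProductSpace ℝ E]

theorem isAveraged_iff_nonexpansive (T : E → E) {κ : ℝ} (hκ : κ ≠ 0) :
    IsAveraged T κ ↔ Nonexpansive (fun x => κ⁻¹ • (T x - (1 - κ) • x)) := by
  have hN (N : E → E) : (∀ x, T x = (1 - κ) • x + κ • N x) ↔
      N = fun x => κ⁻¹ • (T x - (1 - κ) • x) := by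
    simp only [funext_iff, eq_inv_smul_iff₀ hκ, eq_sub_iff_add_eq, add_comm, eq_comm]
  simp only [IsAveraged, hN, exists_eq_right]

theorem isAveraged_iff_norm_sub_smul_le (T : E →L[ℝ] E) {κ : ℝ} (hκ : 0 < κ) :
    IsAveraged T κ ↔ ∀ x, ‖T x - (1 - κ) • x‖ ≤ κ * ‖x‖ := by
  let N : E →L[ℝ] E := κ⁻¹ • (T - (1 - κ) • ContinuousLinearMap.id ℝ E)
  have hN : (fun x => κ⁻¹ • (T x - (1 - κ) • x)) = N := rfl
  rw [isAveraged_iff_nonexpansive _ hκ.ne', hN, nonexpansive_iff_norm_map_le]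
  refine forall_congr' fun x => ?_
  rw [← div_le_iff₀' hκ, div_eq_inv_mul]
  simp [N, norm_smul, abs_of_pos hκ]

end

theorem inner_averagedness_form_eq (T : X →L[ℝ] X) (κ : ℝ) (x : X) :
    ⟪x, (2 * κ - 1) • x -
        (ContinuousLinearMap.adjoint T (T x)
          - (1 - κ) • (T x + ContinuousLinearMap.adjoint T x))⟫
      = κ ^ 2 * ‖x‖ ^ 2 - ‖T x - (1 - κ) • x‖ ^ 2 := by
  simp only [inner_sub_right, inner_smul_right, inner_add_right,
    ContinuousLinearMap.adjoint_inner_right, real_inner_self_eq_norm_sq, norm_sub_sq_real,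
    norm_smul, real_inner_comm x (T x), Real.norm_eq_abs, mul_pow, sq_abs]
  ring

theorem averaged_iff_posSemidef_general (T : X →L[ℝ] X) (κ : ℝ)
    (hκ : κ ∈ Ioc (0 : ℝ) 1) :
    IsAveraged (⇑T) κ ↔
      ∀ x : X, 0 ≤ ⟪x, (2 * κ - 1) • x -
        (ContinuousLinearMap.adjoint T (T x)
          - (1 - κ) • (T x + ContinuousLinearMap.adjoint T x))⟫ := by
  rw [isAveraged_iff_norm_sub_smul_le T hκ.1]
  refine forall_congr' fun x => ?_
  rw [inner_averagedness_form_eq, sub_nonneg, ← mul_pow,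
    sq_le_sq₀ (norm_nonneg _) (mul_nonneg hκ.1.le (norm_nonneg x))]

theorem averaged_iff_posSemidef (T : X →L[ℝ] X) (hT : ‖T‖ ≤ 1) (κ : ℝ)
    (hκ : κ ∈ Ioc (0 : ℝ) 1) :
    IsAveraged (⇑T) κ ↔
      ∀ x : X, 0 ≤ ⟪x, (2 * κ - 1) • x -
        (ContinuousLinearMap.adjoint T (T x)
          - (1 - κ) • (T x + ContinuousLinearMap.adjoint T x))⟫ :=
  averaged_iff_posSemidef_general T κ hκ
end
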